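/- arXiv:1602.02706 — 3 statements merged into one kernel-verified Lean document; each statement's English description precedes it below -/
import Mathlib

section
/- Let γ : S × S → ℝ be order-compatible (i ≻ j iff γ(i,j) > 0) with γ(i,j) = -γ(j,i), and suppose γ(i,j) = 0 whenever i ∥ j. Let 0 < ε < d(P) where d(P) = min{γ(i,j) : i ∈ P, j ∈ S \ P, i ≻ j}. Then the only ε-approximation of the Pareto front P is P itself. -/
/-- If 0 < ε < d(P), then the only ε-approximation of the Pareto front P is P itself. -/
theorem stmt_7 {α : Type*} [PartialOrder α] [Fintype α]
    (γ : α → α → ℝ)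
    (hcompat : ∀ i j : α, j < i ↔ 0 < γ i j)
    (hanti : ∀ i j : α, γ i j = -γ j i)
    (hincomp : ∀ i j : α, ¬ i ≤ j → ¬ j ≤ i → γ i j = 0)
    (ε : ℝ) (hε : 0 < ε)
    -- ε < d(P), where d(P) is the minimum of γ i j over i ∈ P, j ∉ P with i ≻ j
    (hd : ∀ i ∈ {a : α | ∀ b : α, ¬ a < b}, ∀ j ∉ {a : α | ∀ b : α, ¬ a < b},
      j < i → ε < γ i j)
    (P' : Set α)
    (happrox : {a : α | ∀ b : α, ¬ a < b} ⊆ P' ∧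
      ∀ p ∈ P', ∀ q ∈ P', p ≠ q → |γ p q| ≤ ε) :
    P' = {a : α | ∀ b : α, ¬ a < b} := by
  obtain ⟨hsub, hanti'⟩ := happrox
  apply Set.eq_of_subset_of_subset _ hsub
  intro x hx
  by_contra hxP
  simp only [Set.mem_setOf_eq, not_forall, not_not] at hxP
  obtain ⟨b, hb⟩ := hxP
  -- get a maximal element m above b
  obtain ⟨m, hbm, hm⟩ := Finite.exists_le_maximal (p := fun _ : α => True) trivial (a := b)
  have hmP : m ∈ {a : α | ∀ b : α, ¬ a < b} := fun c hc => hc.not_ge (hm.2 trivial hc.le)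
  have hxm : x < m := lt_of_lt_of_le hb hbm
  have hxnotP : x ∉ {a : α | ∀ b : α, ¬ a < b} := fun h => h b hb
  have h1 : ε < γ m x := hd m hmP x hxnotP hxm
  have h2 : |γ m x| ≤ ε := hanti' m (hsub hmP) x hx hxm.ne'
  exact absurd (le_abs_self _ |>.trans h2) (not_le.2 h1)
end

section
/- Let a' be a Δ-decoy of a and b' be a Δ-decoy of b in a poset S with pairwise weights γ satisfying partial observability (γ(x,y) = 0 when x ∥ y) and order compatibility. Then a and b are comparable if and only if max(γ(b, a'), γ(a, b')) ≥ Δ. -/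
theorem weight_eq_zero_of_incomparable_of_decoy {α : Type*} [PartialOrder α] (γ : α → α → ℝ)
    (hincomp : ∀ i j : α, ¬ i ≤ j → ¬ j ≤ i → γ i j = 0) {a a' c : α}
    (hdecoy : ∀ c : α, (¬ a ≤ c ∧ ¬ c ≤ a) → (¬ a' ≤ c ∧ ¬ c ≤ a'))
    (hac : ¬ a ≤ c) (hca : ¬ c ≤ a) : γ c a' = 0 :=
  have ⟨ha'c, hca'⟩ := hdecoy c ⟨hac, hca⟩
  hincomp c a' hca' ha'c

theorem stmt_8_general {α : Type*} [PartialOrder α]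
    (γ : α → α → ℝ)
    (hincomp : ∀ i j : α, ¬ i ≤ j → ¬ j ≤ i → γ i j = 0)
    (Δ : ℝ) (hΔ : 0 < Δ)
    (a b a' b' : α)
    -- a' is a Δ-decoy of a
    (hdA2 : ∀ c : α, (¬ a ≤ c ∧ ¬ c ≤ a) → (¬ a' ≤ c ∧ ¬ c ≤ a'))
    (hdA3 : ∀ c : α, a ≤ c → Δ ≤ γ c a')
    -- b' is a Δ-decoy of b
    (hdB2 : ∀ c : α, (¬ b ≤ c ∧ ¬ c ≤ b) → (¬ b' ≤ c ∧ ¬ c ≤ b'))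
    (hdB3 : ∀ c : α, b ≤ c → Δ ≤ γ c b') :
    (a ≤ b ∨ b ≤ a) ↔ Δ ≤ max (γ b a') (γ a b') := by
  refine ⟨?_, fun h => ?_⟩
  · rintro (hab | hba)
    · exact le_max_of_le_left (hdA3 b hab)
    · exact le_max_of_le_right (hdB3 a hba)
  · by_contra! hincomparable
    obtain ⟨hab, hba⟩ := hincomparable
    have hba' := weight_eq_zero_of_incomparable_of_decoy γ hincomp hdA2 hab hba
    have hab' := weight_eq_zero_of_incomparable_of_decoy γ hincomp hdB2 hba hab
    rw [hba', hab', max_self] at h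
    exact hΔ.not_ge h

/-- Using Δ-decoys, comparability of two arms can be detected:
a and b are comparable iff max(γ(b,a'), γ(a,b')) ≥ Δ. -/
theorem stmt_8 {α : Type*} [PartialOrder α]
    (γ : α → α → ℝ)
    (hcompat : ∀ i j : α, j < i ↔ 0 < γ i j)
    (hanti : ∀ i j : α, γ i j = -γ j i)
    (hincomp : ∀ i j : α, ¬ i ≤ j → ¬ j ≤ i → γ i j = 0)
    (Δ : ℝ) (hΔ : 0 < Δ)
    (a b a' b' : α)
    -- a' is a Δ-decoy of a
    (hdA1 : a' ≤ a ∧ Δ ≤ γ a a')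
    (hdA2 : ∀ c : α, (¬ a ≤ c ∧ ¬ c ≤ a) → (¬ a' ≤ c ∧ ¬ c ≤ a'))
    (hdA3 : ∀ c : α, a ≤ c → Δ ≤ γ c a')
    -- b' is a Δ-decoy of b
    (hdB1 : b' ≤ b ∧ Δ ≤ γ b b')
    (hdB2 : ∀ c : α, (¬ b ≤ c ∧ ¬ c ≤ b) → (¬ b' ≤ c ∧ ¬ c ≤ b'))
    (hdB3 : ∀ c : α, b ≤ c → Δ ≤ γ c b') :
    (a ≤ b ∨ b ≤ a) ↔ Δ ≤ max (γ b a') (γ a b') :=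
  stmt_8_general γ hincomp Δ hΔ a b a' b' hdA2 hdA3 hdB2 hdB3
end

section
/- Extending a dueling-bandit poset with a decoy yields a valid structure: given a finite poset (S, ≽) with weights γ satisfying order compatibility and partial observability, and a ∈ S, define S' = S ∪ {a'} (a' a fresh element), keep ≽ and γ on S, and set b ≽' a' with γ'(b,a') = max(γ(b,a), Δ) for every b ≽ a (including b = a), and b ∥ a' otherwise. Then (S', ≽') is a poset, γ' satisfies order compatibility and partial observability on S', γ' restricted to S equals γ, and a' is a Δ-decoy of a in S'. -/
/-- The order on `S ∪ {a'}` obtained by adding a decoy `a'` of `a` (modelled on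
`Option α` with `none` playing the role of `a'`). -/
def decoyLE {α : Type*} [PartialOrder α] (a : α) : Option α → Option α → Prop
  | none, none => True
  | none, some c => a ≤ c
  | some _, none => False
  | some b, some c => b ≤ c

/-- The weights on `S ∪ {a'}` obtained by adding a decoy `a'` of `a`. -/
noncomputable def decoyGamma {α : Type*} [PartialOrder α] [DecidableEq α]
    [DecidableRel ((· ≤ ·) : α → α → Prop)]
    (γ : α → α → ℝ) (a : α) (Δ : ℝ) : Option α → Option α → ℝ
  | none, none => 0
  | none, some c => if a ≤ c then -(max (γ c a) Δ) else 0
  | some b, none => if a ≤ b then max (γ b a) Δ else 0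
  | some b, some c => γ b c

/-- Extending a dueling-bandit partially-observable poset with a Δ-decoy of an arm `a`
yields a valid dueling-bandit partially-observable poset in which the new element is
a Δ-decoy of `a`, and whose weights restrict to the original ones. -/
theorem stmt_11 {α : Type*} [PartialOrder α] [Fintype α] [DecidableEq α]
    [DecidableRel ((· ≤ ·) : α → α → Prop)]
    (γ : α → α → ℝ)
    (hbound : ∀ i j : α, |γ i j| < 1/2)
    (hanti : ∀ i j : α, γ i j = -γ j i)
    (hcompat : ∀ i j : α, j < i ↔ 0 < γ i j)
    (hincomp : ∀ i j : α, ¬ i ≤ j → ¬ j ≤ i → γ i j = 0)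
    (a : α) (Δ : ℝ) (hΔ : 0 < Δ) (hΔ' : Δ < 1/2) :
    -- (S', ≽') is a poset
    (IsPartialOrder (Option α) (decoyLE a)) ∧
    -- γ' is antisymmetric, bounded, order compatible and partially observable
    (∀ i j : Option α, decoyGamma γ a Δ i j = -(decoyGamma γ a Δ j i)) ∧
    (∀ i j : Option α, |decoyGamma γ a Δ i j| < 1/2) ∧
    (∀ i j : Option α, (decoyLE a j i ∧ j ≠ i) ↔ 0 < decoyGamma γ a Δ i j) ∧
    (∀ i j : Option α, ¬ decoyLE a i j → ¬ decoyLE a j i → decoyGamma γ a Δ i j = 0) ∧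
    -- γ' restricted to S equals γ
    (∀ b c : α, decoyGamma γ a Δ (some b) (some c) = γ b c) ∧
    -- a' (= none) is a Δ-decoy of a
    (decoyLE a none (some a) ∧ Δ ≤ decoyGamma γ a Δ (some a) none) ∧
    (∀ c : Option α, (¬ decoyLE a (some a) c ∧ ¬ decoyLE a c (some a)) →
      (¬ decoyLE a none c ∧ ¬ decoyLE a c none)) ∧
    (∀ c : Option α, decoyLE a (some a) c → Δ ≤ decoyGamma γ a Δ c none) := by
  have hγaa : γ a a = 0 := by have := hanti a a; linarith
  have hmaxbound : ∀ b : α, |max (γ b a) Δ| < 1/2 := by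
    intro b
    rw [abs_lt]
    have := abs_lt.1 (hbound b a)
    rcases le_total (γ b a) Δ with h | h
    · rw [max_eq_right h]; constructor <;> linarith
    · rw [max_eq_left h]; constructor <;> linarith
  have hmaxpos : ∀ b : α, 0 < max (γ b a) Δ := fun b => lt_of_lt_of_le hΔ (le_max_right _ _)
  refine ⟨?_, ?_, ?_, ?_, ?_, ?_, ?_, ?_, ?_⟩
  · exact {
      refl := fun x => by cases x <;> first | exact trivial | exact le_refl _
      trans := fun x y z hxy hyz => by
        cases x <;> cases y <;> cases z <;>
          first | trivial | exact le_trans hxy hyz | exact hxy.elim | exact hyz.elim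
      antisymm := fun x y hxy hyx => by
        cases x <;> cases y
        · rfl
        · exact hyx.elim
        · exact hxy.elim
        · exact congrArg some (le_antisymm hxy hyx) }
  · intro i j
    cases i <;> cases j <;> simp only [decoyGamma]
    · simp
    · split <;> simp
    · split <;> simp
    · exact hanti _ _
  · intro i j
    cases i <;> cases j <;> simp only [decoyGamma]
    · norm_num
    · split
      · rw [abs_neg]; exact hmaxbound _
      · norm_num
    · split
      · exact hmaxbound _
      · norm_num
    · exact hbound _ _
  · intro i j
    cases i with
    | none =>
      cases j with
      | none => simp [decoyLE, decoyGamma]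
      | some c =>
        constructor
        · rintro ⟨h, -⟩; exact h.elim
        · intro h
          simp only [decoyGamma] at h
          by_cases hac : a ≤ c
          · rw [if_pos hac] at h; linarith [hmaxpos c]
          · rw [if_neg hac] at h; exact absurd h (lt_irrefl 0)
    | some b =>
      cases j with
      | none =>
        constructor
        · rintro ⟨h, -⟩
          show 0 < if a ≤ b then max (γ b a) Δ else 0
          rw [if_pos (show a ≤ b from h)]; exact hmaxpos b
        · intro h
          simp only [decoyGamma] at h
          by_cases hab : a ≤ b
          · exact ⟨hab, by simp⟩
          · rw [if_neg hab] at h; exact absurd h (lt_irrefl 0)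
      | some c =>
        show (c ≤ b ∧ _ ≠ _) ↔ 0 < γ b c
        rw [← hcompat b c]
        constructor
        · rintro ⟨h1, h2⟩; exact lt_of_le_of_ne h1 (by simpa using h2)
        · intro h; exact ⟨h.le, by simpa using h.ne⟩
  · intro i j hij hji
    cases i <;> cases j
    · rfl
    · show (if a ≤ _ then _ else 0) = 0
      rw [if_neg]; exact fun h => hij h
    · show (if a ≤ _ then _ else 0) = 0
      rw [if_neg]; exact fun h => hji h
    · exact hincomp _ _ hij hji
  · intro b c; rfl
  · refine ⟨le_refl a, ?_⟩
    show Δ ≤ if a ≤ a then max (γ a a) Δ else 0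
    rw [if_pos le_rfl, hγaa, max_eq_right hΔ.le]
  · intro c hc
    cases c with
    | none => exact absurd (le_refl a) hc.2
    | some d => exact ⟨hc.1, fun h => h⟩
  · intro c hc
    cases c with
    | none => exact hc.elim
    | some d =>
      have had : a ≤ d := hc
      show Δ ≤ if a ≤ d then max (γ d a) Δ else 0
      rw [if_pos had]; exact le_max_right _ _
end
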